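/- If gcd(m,n) = 1, then K_m ⊗ K_n is isomorphic to the circulant graph on Z/mnZ where i is adjacent to j iff i - j is divisible by neither m nor n. -/

import Mathlib

/-!
The tensor product of the complete graphs on two additive groups is the circulant graph whose
jumps are the pairs with both coordinates nonzero. The Chinese remainder theorem is an additive
isomorphism `ZMod (m * n) ≃+ ZMod m × ZMod n` pulling this jump set back to the residues divisible
by neither `m` nor `n`, and additive isomorphisms transport circulant graphs.
-/

open SimpleGraph

/-- A graph is circulant iff its automorphism group contains a transitive cyclic subgroup,
i.e. some automorphism whose iterates act transitively on the vertices. -/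
def SimpleGraph.IsCirculant {V : Type*} (G : SimpleGraph V) : Prop :=
  ∃ φ : G ≃g G, ∀ v w : V, ∃ k : ℕ, (φ.toEquiv ^ k) v = w

/-- The tensor (categorical/Kronecker) product of simple graphs. -/
def SimpleGraph.tensor {α β : Type*} (G : SimpleGraph α) (H : SimpleGraph β) :
    SimpleGraph (α × β) where
  Adj x y := G.Adj x.1 y.1 ∧ H.Adj x.2 y.2
  symm := ⟨fun _ _ h => ⟨h.1.symm, h.2.symm⟩⟩
  loopless := ⟨fun x h => G.loopless.irrefl x.1 h.1⟩

namespace SimpleGraph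

variable {α α' β β' : Type*} {G : SimpleGraph α} {G' : SimpleGraph α'} {H : SimpleGraph β}
  {H' : SimpleGraph β'}

def Iso.tensor (e₁ : G ≃g G') (e₂ : H ≃g H') : G.tensor H ≃g G'.tensor H' where
  toEquiv := e₁.toEquiv.prodCongr e₂.toEquiv
  map_rel_iff' := and_congr e₁.map_rel_iff e₂.map_rel_iff

theorem tensor_completeGraph_eq_circulantGraph (A B : Type*) [AddGroup A] [AddGroup B] :
    (completeGraph A).tensor (completeGraph B) =
      circulantGraph {z : A × B | z.1 ≠ 0 ∧ z.2 ≠ 0} := by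
  ext x y
  simp only [tensor, top_adj, circulantGraph_adj, Set.mem_ofPred_eq, Prod.fst_sub, Prod.snd_sub,
    sub_ne_zero, Prod.ext_iff]
  tauto

end SimpleGraph

def AddEquiv.circulantGraphIso {A B : Type*} [AddGroup A] [AddGroup B] (f : A ≃+ B) (t : Set B) :
    circulantGraph (f ⁻¹' t) ≃g circulantGraph t where
  toEquiv := f.toEquiv
  map_rel_iff' := by simp [← map_sub]

theorem ZMod.cast_eq_zero_iff_dvd_val {N : ℕ} [NeZero N] (k : ℕ) (a : ZMod N) :
    (cast a : ZMod k) = 0 ↔ k ∣ a.val := by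
  rw [← ZMod.natCast_val, ZMod.natCast_eq_zero_iff]

theorem ZMod.chineseRemainder_preimage_setOf_ne_zero {m n : ℕ} [NeZero (m * n)] (h : m.Coprime n) :
    chineseRemainder h ⁻¹' {z | z.1 ≠ 0 ∧ z.2 ≠ 0} = {z | ¬ m ∣ z.val ∧ ¬ n ∣ z.val} := by
  ext a
  simp [chineseRemainder, cast_eq_zero_iff_dvd_val]

theorem stmt_12 (m n : ℕ) (hm : 1 ≤ m) (hn : 1 ≤ n) (hcop : Nat.Coprime m n) :
    Nonempty
      ((completeGraph (Fin m)).tensor (completeGraph (Fin n)) ≃g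
        SimpleGraph.circulantGraph
          {z : ZMod (m * n) | ¬ (m : ℕ) ∣ z.val ∧ ¬ (n : ℕ) ∣ z.val}) := by
  have : NeZero m := ⟨by omega⟩
  have : NeZero n := ⟨by omega⟩
  refine ⟨((Iso.completeGraph (ZMod.finEquiv m).toEquiv).tensor
    (Iso.completeGraph (ZMod.finEquiv n).toEquiv)).trans ?_⟩
  rw [tensor_completeGraph_eq_circulantGraph, ← ZMod.chineseRemainder_preimage_setOf_ne_zero hcop]
  exact ((ZMod.chineseRemainder hcop).toAddEquiv.circulantGraphIso _).symm
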